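/- Let X ⊆ ℝ^m be nonempty closed convex and x : [0,∞) → ℝ^m be a solution of the ODE x'(t) = k(P_X(x(t)) - x(t)) with k > 0. Then V(t) = ½‖x(t) - P_X(x(t))‖² satisfies V'(t) = -2k V(t), hence dist(x(t), X) = dist(x(0), X) e^{-kt} → 0 exponentially. -/

import Mathlib

/-!
For convex `K`, a nearest-point map `P` is characterised by `⟪v - P v, y - P v⟫ ≤ 0` for
`y ∈ K`, which makes it 1-Lipschitz. Comparing `v` and `v + h` with each other's nearest points
then shows that `v ↦ ‖v - P v‖²` is differentiable with gradient `2 (v - P v)`, without ever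
differentiating `P`. Along `x' = k (P x - x)` this gives `V' = k ⟪x - P x, P x - x⟫ = -2kV` for
`V = ½‖x - P x‖²`, so `V(t) = V(0) e^{-2kt}`, and taking square roots gives the decay of the
distance.
-/

open Filter Asymptotics RealInnerProductSpace

theorem hasFDerivAt_of_norm_sub_le_sq {E F : Type*} [NormedAddCommGroup E] [NormedSpace ℝ E]
    [NormedAddCommGroup F] [NormedSpace ℝ F] {f : E → F} {L : E →L[ℝ] F} {x : E} (C : ℝ)
    (hf : ∀ h, ‖f (x + h) - f x - L h‖ ≤ C * ‖h‖ ^ 2) : HasFDerivAt f L x := by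
  rw [hasFDerivAt_iff_isLittleO_nhds_zero]
  refine (IsBigO.of_bound C (Eventually.of_forall fun h => ?_)).trans_isLittleO
    (isLittleO_norm_pow_id one_lt_two)
  simpa only [norm_pow, norm_norm] using hf h

theorem eq_mul_exp_of_hasDerivAt {f : ℝ → ℝ} {c : ℝ} (hf : ∀ t, HasDerivAt f (c * f t) t)
    (t : ℝ) : f t = f 0 * Real.exp (c * t) := by
  have hderiv : ∀ s, HasDerivAt (fun s => f s * Real.exp (-(c * s))) 0 s := fun s =>
    ((hf s).mul ((hasDerivAt_id' s).const_mul c).neg.exp).congr_deriv (by ring)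
  have hconst := is_const_of_deriv_eq_zero (fun s => (hderiv s).differentiableAt)
    (fun s => (hderiv s).deriv) t 0
  simp only [mul_zero, neg_zero, Real.exp_zero, mul_one, Real.exp_neg] at hconst
  rw [← hconst]
  field_simp

section MetricProjection

variable {E : Type*} [NormedAddCommGroup E] [InnerProductSpace ℝ E]

def IsMetricProjection (K : Set E) (P : E → E) : Prop :=
  ∀ v, P v ∈ K ∧ ∀ y ∈ K, ‖v - P v‖ ≤ ‖v - y‖

namespace IsMetricProjection

variable {K : Set E} {P : E → E}

theorem inner_sub_nonpos (hP : IsMetricProjection K P) (hK : Convex ℝ K) (v : E) {y : E}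
    (hy : y ∈ K) : ⟪v - P v, y - P v⟫ ≤ 0 := by
  have : Nonempty K := ⟨⟨P v, (hP v).1⟩⟩
  refine (norm_eq_iInf_iff_real_inner_le_zero hK (hP v).1).mp ?_ y hy
  refine le_antisymm (le_ciInf fun w => (hP v).2 w w.2) (ciInf_le ?_ (⟨P v, (hP v).1⟩ : K))
  exact ⟨0, Set.forall_mem_range.2 fun w => norm_nonneg _⟩

theorem norm_sub_le_norm_sub (hP : IsMetricProjection K P) (hK : Convex ℝ K) (u v : E) :
    ‖P u - P v‖ ≤ ‖u - v‖ := by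
  have hu := hP.inner_sub_nonpos hK u (hP v).1
  have hv := hP.inner_sub_nonpos hK v (hP u).1
  have key : ‖P u - P v‖ ^ 2 ≤ ⟪u - v, P u - P v⟫ := by
    rw [← real_inner_self_eq_norm_sq]
    simp only [inner_sub_left, inner_sub_right, real_inner_comm] at hu hv ⊢
    linarith
  nlinarith [real_inner_le_norm (u - v) (P u - P v), norm_nonneg (P u - P v),
    norm_nonneg (u - v)]

theorem sq_norm_sub_le (hP : IsMetricProjection K P) (v h : E) :
    ‖v + h - P (v + h)‖ ^ 2 ≤ ‖v - P v‖ ^ 2 + 2 * ⟪v - P v, h⟫ + ‖h‖ ^ 2 :=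
  calc ‖v + h - P (v + h)‖ ^ 2 ≤ ‖v + h - P v‖ ^ 2 := by
        gcongr; exact (hP _).2 _ (hP v).1
    _ = ‖v - P v‖ ^ 2 + 2 * ⟪v - P v, h⟫ + ‖h‖ ^ 2 := by
        rw [show v + h - P v = (v - P v) + h by abel, norm_add_sq_real]

theorem abs_sq_norm_sub_sub_le (hP : IsMetricProjection K P) (hK : Convex ℝ K) (v h : E) :
    |‖v + h - P (v + h)‖ ^ 2 - ‖v - P v‖ ^ 2 - 2 * ⟪v - P v, h⟫| ≤ 5 * ‖h‖ ^ 2 := by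
  have hupper := hP.sq_norm_sub_le v h
  have hlower := hP.sq_norm_sub_le (v + h) (-h)
  rw [add_neg_cancel_right, inner_neg_right, norm_neg] at hlower
  set w := v + h - P (v + h)
  have hdiff : ‖w - (v - P v)‖ ≤ 2 * ‖h‖ :=
    calc ‖w - (v - P v)‖ = ‖h - (P (v + h) - P v)‖ := by congr 1; simp only [w]; abel
      _ ≤ ‖h‖ + ‖(v + h) - v‖ :=
        (norm_sub_le _ _).trans (by gcongr; exact hP.norm_sub_le_norm_sub hK _ _)
      _ = 2 * ‖h‖ := by rw [add_sub_cancel_left]; ring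
  have hinner : |⟪w - (v - P v), h⟫| ≤ 2 * ‖h‖ ^ 2 :=
    (abs_real_inner_le_norm _ _).trans (by nlinarith [norm_nonneg h])
  rw [inner_sub_left] at hinner
  rw [abs_le] at hinner ⊢
  constructor <;> nlinarith [norm_nonneg h]

theorem hasFDerivAt_sq_norm_sub (hP : IsMetricProjection K P) (hK : Convex ℝ K) (v : E) :
    HasFDerivAt (fun w => ‖w - P w‖ ^ 2) ((2 : ℝ) • innerSL ℝ (v - P v)) v :=
  hasFDerivAt_of_norm_sub_le_sq 5 fun h => by
    simpa only [smul_apply, innerSL_apply_apply, smul_eq_mul,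
      Real.norm_eq_abs] using hP.abs_sq_norm_sub_sub_le hK v h

end IsMetricProjection

end MetricProjection

theorem single_agent_exponential_decay_general {m : ℕ}
    (X : Set (EuclideanSpace ℝ (Fin m)))
    (hconv : Convex ℝ X)
    (P : EuclideanSpace ℝ (Fin m) → EuclideanSpace ℝ (Fin m))
    (hP : ∀ v, P v ∈ X ∧ ∀ y ∈ X, ‖v - P v‖ ≤ ‖v - y‖)
    (k : ℝ) (x : ℝ → EuclideanSpace ℝ (Fin m))
    (hx : ∀ t, HasDerivAt x (k • (P (x t) - x t)) t) :
    (∀ t : ℝ, 0 ≤ t →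
        HasDerivAt (fun s => (1 / 2 : ℝ) * ‖x s - P (x s)‖ ^ 2)
          (-2 * k * ((1 / 2 : ℝ) * ‖x t - P (x t)‖ ^ 2)) t) ∧
      ∀ t : ℝ, 0 ≤ t →
        ‖x t - P (x t)‖ = ‖x 0 - P (x 0)‖ * Real.exp (-k * t) := by
  have hV : ∀ t, HasDerivAt (fun s => (1 / 2 : ℝ) * ‖x s - P (x s)‖ ^ 2)
      (-2 * k * ((1 / 2 : ℝ) * ‖x t - P (x t)‖ ^ 2)) t := fun t => by
    refine (((IsMetricProjection.hasFDerivAt_sq_norm_sub hP hconv (x t)).comp_hasDerivAt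
      t (hx t)).const_mul (1 / 2 : ℝ)).congr_deriv ?_
    rw [smul_apply, innerSL_apply_apply, smul_eq_mul, inner_smul_right,
      ← neg_sub (x t), inner_neg_right, real_inner_self_eq_norm_sq]
    ring
  refine ⟨fun t _ => hV t, fun t _ => ?_⟩
  have hsq := eq_mul_exp_of_hasDerivAt hV t
  rw [← pow_left_inj₀ (norm_nonneg _) (by positivity) two_ne_zero, mul_pow, ← Real.exp_nat_mul,
    Nat.cast_ofNat, show (2 : ℝ) * (-k * t) = -2 * k * t by ring]
  linarith

/-- For a solution of `x' = k(P_X(x) - x)` with `k > 0`, the function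
`V(t) = ½‖x(t) - P_X(x(t))‖²` satisfies `V' = -2kV`, so the distance to `X`
decays exponentially: `‖x(t) - P_X(x(t))‖ = ‖x(0) - P_X(x(0))‖·e^{-kt}`. -/
theorem single_agent_exponential_decay {m : ℕ}
    (X : Set (EuclideanSpace ℝ (Fin m)))
    (hne : X.Nonempty) (hcl : IsClosed X) (hconv : Convex ℝ X)
    (P : EuclideanSpace ℝ (Fin m) → EuclideanSpace ℝ (Fin m))
    (hP : ∀ v, P v ∈ X ∧ ∀ y ∈ X, ‖v - P v‖ ≤ ‖v - y‖)
    (k : ℝ) (hk : 0 < k) (x : ℝ → EuclideanSpace ℝ (Fin m))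
    (hx : ∀ t, HasDerivAt x (k • (P (x t) - x t)) t) :
    (∀ t : ℝ, 0 ≤ t →
        HasDerivAt (fun s => (1 / 2 : ℝ) * ‖x s - P (x s)‖ ^ 2)
          (-2 * k * ((1 / 2 : ℝ) * ‖x t - P (x t)‖ ^ 2)) t) ∧
      ∀ t : ℝ, 0 ≤ t →
        ‖x t - P (x t)‖ = ‖x 0 - P (x 0)‖ * Real.exp (-k * t) :=
  single_agent_exponential_decay_general X hconv P hP k x hx
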